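/- Each sort of the sorted target calculus is closed under βη-reduction: if P is a term of sort T (respectively Q, W, or K) and P →_{βη} P', then P' is again a term of the same sort. -/

import Mathlib

/-! Substituting a `W`-term for an ordinary variable, or a `K`-term for a continuation variable,
preserves every sort, since variables of each kind occur exactly where terms of that sort may.
A sorted β-redex therefore contracts to a sorted term. In an η-redex `λx. P x` or `λk. P k`
the body can only be sorted by the production `W W`, `K W` or `T K` whose head `P` has the sort
of the redex itself. -/

/-- Untyped λ-terms with two categories of variables (ordinary `ovar` and
continuation `kvar`) and two corresponding binders. -/
inductive L : Type
  | ovar : ℕ → L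
  | kvar : ℕ → L
  | lamO : ℕ → L → L
  | lamK : ℕ → L → L
  | app : L → L → L
  deriving DecidableEq

/-- Free ordinary variables. -/
def fvO : L → Finset ℕ
  | .ovar x => {x}
  | .kvar _ => ∅
  | .lamO x P => fvO P \ {x}
  | .lamK _ P => fvO P
  | .app P Q => fvO P ∪ fvO Q

/-- Free continuation variables. -/
def fvK : L → Finset ℕ
  | .ovar _ => ∅
  | .kvar k => {k}
  | .lamO _ P => fvK P
  | .lamK k P => fvK P \ {k}
  | .app P Q => fvK P ∪ fvK Q

/-- Substitution for an ordinary variable. -/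
def osub (x : ℕ) (A : L) : L → L
  | .ovar y => if y = x then A else .ovar y
  | .kvar k => .kvar k
  | .lamO y P => if y = x then .lamO y P else .lamO y (osub x A P)
  | .lamK k P => .lamK k (osub x A P)
  | .app P Q => .app (osub x A P) (osub x A Q)

/-- Substitution for a continuation variable. -/
def ksub (k : ℕ) (A : L) : L → L
  | .ovar y => .ovar y
  | .kvar l => if l = k then A else .kvar l
  | .lamO y P => .lamO y (ksub k A P)
  | .lamK l P => if l = k then .lamK l P else .lamK l (ksub k A P)
  | .app P Q => .app (ksub k A P) (ksub k A Q)

/-- One βη-reduction step (binder type matching the argument category),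
applied in any context. -/
inductive Step : L → L → Prop
  | betaO (x : ℕ) (P A : L) : Step (.app (.lamO x P) A) (osub x A P)
  | betaK (k : ℕ) (P A : L) : Step (.app (.lamK k P) A) (ksub k A P)
  | etaO (x : ℕ) (P : L) (h : x ∉ fvO P) : Step (.lamO x (.app P (.ovar x))) P
  | etaK (k : ℕ) (P : L) (h : k ∉ fvK P) : Step (.lamK k (.app P (.kvar k))) P
  | lamO : Step P P' → Step (.lamO x P) (.lamO x P')
  | lamK : Step P P' → Step (.lamK k P) (.lamK k P')
  | appL : Step P P' → Step (.app P Q) (.app P' Q)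
  | appR : Step Q Q' → Step (.app P Q) (.app P Q')

mutual
/-- Sorting judgment: terms of sort T ::= λk.Q | WW. -/
inductive SortT : L → Prop
  | lamK : SortQ Q → SortT (.lamK k Q)
  | app : SortW W → SortW W' → SortT (.app W W')
/-- Terms of sort Q ::= KW | TK. -/
inductive SortQ : L → Prop
  | kw : SortK K → SortW W → SortQ (.app K W)
  | tk : SortT T → SortK K → SortQ (.app T K)
/-- Terms of sort W ::= x | λx.T. -/
inductive SortW : L → Prop
  | var : SortW (.ovar x)
  | lam : SortT T → SortW (.lamO x T)
/-- Terms of sort K ::= k | λx.Q. -/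
inductive SortK : L → Prop
  | kvar : SortK (.kvar k)
  | lamQ : SortQ Q → SortK (.lamO x Q)
end

section Substitution

variable {x : ℕ} {A : L}

mutual

theorem SortT.osub (hA : SortW A) : ∀ {P}, SortT P → SortT (osub x A P)
  | _, .lamK hQ => .lamK (SortQ.osub hA hQ)
  | _, .app hW hW' => .app (SortW.osub hA hW) (SortW.osub hA hW')

theorem SortQ.osub (hA : SortW A) : ∀ {P}, SortQ P → SortQ (osub x A P)
  | _, .kw hK hW => .kw (SortK.osub hA hK) (SortW.osub hA hW)
  | _, .tk hT hK => .tk (SortT.osub hA hT) (SortK.osub hA hK)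

theorem SortW.osub (hA : SortW A) : ∀ {P}, SortW P → SortW (osub x A P)
  | _, .var => by
    dsimp only [_root_.osub]; split_ifs
    exacts [hA, .var]
  | _, .lam hT => by
    dsimp only [_root_.osub]; split_ifs
    exacts [.lam hT, .lam (SortT.osub hA hT)]

theorem SortK.osub (hA : SortW A) : ∀ {P}, SortK P → SortK (osub x A P)
  | _, .kvar => .kvar
  | _, .lamQ hQ => by
    dsimp only [_root_.osub]; split_ifs
    exacts [.lamQ hQ, .lamQ (SortQ.osub hA hQ)]

end

variable {k : ℕ} {B : L}

mutual

theorem SortT.ksub (hB : SortK B) : ∀ {P}, SortT P → SortT (ksub k B P)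
  | _, .lamK hQ => by
    dsimp only [_root_.ksub]; split_ifs
    exacts [.lamK hQ, .lamK (SortQ.ksub hB hQ)]
  | _, .app hW hW' => .app (SortW.ksub hB hW) (SortW.ksub hB hW')

theorem SortQ.ksub (hB : SortK B) : ∀ {P}, SortQ P → SortQ (ksub k B P)
  | _, .kw hK hW => .kw (SortK.ksub hB hK) (SortW.ksub hB hW)
  | _, .tk hT hK => .tk (SortT.ksub hB hT) (SortK.ksub hB hK)

theorem SortW.ksub (hB : SortK B) : ∀ {P}, SortW P → SortW (ksub k B P)
  | _, .var => .var
  | _, .lam hT => .lam (SortT.ksub hB hT)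

theorem SortK.ksub (hB : SortK B) : ∀ {P}, SortK P → SortK (ksub k B P)
  | _, .kvar => by
    dsimp only [_root_.ksub]; split_ifs
    exacts [hB, .kvar]
  | _, .lamQ hQ => .lamQ (SortQ.ksub hB hQ)

end

end Substitution

/- A missing pair of sort rule and step rule is one whose redex has no sort (e.g. `βK` in `W W'`,
or `ηK` on `λk. K k`, where `k` is not of sort `W`); the match compiler rules those cases out. -/
mutual

theorem SortT.step : ∀ {P P'}, SortT P → Step P P' → SortT P'
  | _, _, .lamK hQ, .lamK h => .lamK (SortQ.step hQ h)
  | _, _, .lamK (.tk hT _), .etaK .. => hT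
  | _, _, .app (.lam hT) hW, .betaO .. => SortT.osub hW hT
  | _, _, .app hW hW', .appL h => .app (SortW.step hW h) hW'
  | _, _, .app hW hW', .appR h => .app hW (SortW.step hW' h)

theorem SortQ.step : ∀ {P P'}, SortQ P → Step P P' → SortQ P'
  | _, _, .kw (.lamQ hQ) hW, .betaO .. => SortQ.osub hW hQ
  | _, _, .kw hK hW, .appL h => .kw (SortK.step hK h) hW
  | _, _, .kw hK hW, .appR h => .kw hK (SortW.step hW h)
  | _, _, .tk (.lamK hQ) hK, .betaK .. => SortQ.ksub hK hQ
  | _, _, .tk hT hK, .appL h => .tk (SortT.step hT h) hK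
  | _, _, .tk hT hK, .appR h => .tk hT (SortK.step hK h)

theorem SortW.step : ∀ {P P'}, SortW P → Step P P' → SortW P'
  | _, _, .lam (.app hW _), .etaO .. => hW
  | _, _, .lam hT, .lamO h => .lam (SortT.step hT h)

theorem SortK.step : ∀ {P P'}, SortK P → Step P P' → SortK P'
  | _, _, .lamQ (.kw hK _), .etaO .. => hK
  | _, _, .lamQ hQ, .lamO h => .lamQ (SortQ.step hQ h)

end

/-- Each sort of the sorted target calculus is closed under
βη-reduction. -/
theorem sorts_closed_under_betaEta :
    (∀ P P' : L, SortT P → Step P P' → SortT P') ∧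
    (∀ P P' : L, SortQ P → Step P P' → SortQ P') ∧
    (∀ P P' : L, SortW P → Step P P' → SortW P') ∧
    (∀ P P' : L, SortK P → Step P P' → SortK P') :=
  ⟨fun _ _ => SortT.step, fun _ _ => SortQ.step, fun _ _ => SortW.step, fun _ _ => SortK.step⟩
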